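/- arXiv:1903.01642 — 2 statements merged into one kernel-verified Lean document; each statement's English description precedes it below -/
import Mathlib

section
/- Under the KL-distance formula $D(c, \tilde{c}) = \frac{ab - |c|^2}{ab - |\tilde{c}|^2} - \ln\frac{ab - |c|^2}{ab - |\tilde{c}|^2} - 1 + \frac{|c - \tilde{c}|^2}{ab - |\tilde{c}|^2}$, for fixed $a, b$ with $ab > \max_{c \in \mathcal{Q}} |c|^2$, the minimum of $D(c,\tilde{c})$ over distinct points $c \neq \tilde{c}$ of the square QAM constellation $\mathcal{Q}$ equals $\frac{d^2}{ab - d^2/2}$, attained at nearest-neighbor points with equal modulus, e.g., $c = (1+j)d/2$ and $\tilde{c} = (1-j)d/2$. -/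
/-!
Since `x - log x - 1 ≥ 0` for `x > 0`, the KL distance is at least `|c - c̃|² / (ab - |c̃|²)`.
Both coordinates of a QAM point are odd multiples of `d/2`, so `|c̃|² ≥ d²/2`, and distinct
points differ by an even nonzero multiple of `d/2` in some coordinate, so `|c - c̃|² ≥ d²`.
For the corner points `(1 ± j)d/2` all three bounds are equalities.
-/

/-- The `4^K`-ary square QAM constellation with minimum distance `d`. -/
def squareQAM (K : ℕ) (d : ℝ) : Set ℂ :=
  {z | ∃ m n : ℕ, 1 ≤ m ∧ m ≤ 2 ^ (K - 1) ∧ 1 ≤ n ∧ n ≤ 2 ^ (K - 1) ∧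
    ∃ e₁ e₂ : ℝ, (e₁ = 1 ∨ e₁ = -1) ∧ (e₂ = 1 ∨ e₂ = -1) ∧
      z = ((e₁ * ((m : ℝ) - 1 / 2)) + (e₂ * ((n : ℝ) - 1 / 2)) * Complex.I) * d}

/-- The KL distance `D(c,c̃)` for covariance parameters `a, b`. -/
noncomputable def klDist (a b : ℝ) (c ctil : ℂ) : ℝ :=
  (a * b - ‖c‖ ^ 2) / (a * b - ‖ctil‖ ^ 2)
    - Real.log ((a * b - ‖c‖ ^ 2) / (a * b - ‖ctil‖ ^ 2))
    - 1 + ‖c - ctil‖ ^ 2 / (a * b - ‖ctil‖ ^ 2)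

open Complex

section KLDistance

variable {a b : ℝ} {c c' : ℂ}

lemma div_le_klDist (hc : ‖c‖ ^ 2 < a * b) (hc' : ‖c'‖ ^ 2 < a * b) :
    ‖c - c'‖ ^ 2 / (a * b - ‖c'‖ ^ 2) ≤ klDist a b c c' := by
  have hlog := Real.log_le_sub_one_of_pos (div_pos (sub_pos.2 hc) (sub_pos.2 hc'))
  unfold klDist
  linarith

lemma klDist_of_norm_sq_eq (h : ‖c‖ ^ 2 = ‖c'‖ ^ 2) (hc' : ‖c'‖ ^ 2 ≠ a * b) :
    klDist a b c c' = ‖c - c'‖ ^ 2 / (a * b - ‖c'‖ ^ 2) := by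
  rw [klDist, h, div_self (sub_ne_zero.2 hc'.symm), Real.log_one]
  ring

end KLDistance

lemma Int.one_le_sq_of_ne_zero {n : ℤ} (h : n ≠ 0) : 1 ≤ n ^ 2 :=
  (one_le_sq_iff_one_le_abs n).2 (Int.one_le_abs h)

lemma Int.four_le_sq_of_even_of_ne_zero {n : ℤ} (hn : Even n) (h : n ≠ 0) : 4 ≤ n ^ 2 := by
  obtain ⟨k, rfl⟩ := hn
  have hk : 1 ≤ k ^ 2 := Int.one_le_sq_of_ne_zero (by rintro rfl; simp at h)
  nlinarith

def IsOddMultiple (r x : ℝ) : Prop := ∃ p : ℤ, Odd p ∧ x = p * r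

namespace IsOddMultiple

variable {r x y : ℝ}

lemma sq_le_sq (hx : IsOddMultiple r x) : r ^ 2 ≤ x ^ 2 := by
  obtain ⟨p, hp, rfl⟩ := hx
  have hp0 : p ≠ 0 := by rintro rfl; simp at hp
  have h1 : (1 : ℝ) ≤ (p : ℝ) ^ 2 := by exact_mod_cast Int.one_le_sq_of_ne_zero hp0
  rw [mul_pow]
  nlinarith [sq_nonneg r]

lemma sq_le_sq_sub (hx : IsOddMultiple r x) (hy : IsOddMultiple r y) (hne : x ≠ y) :
    (2 * r) ^ 2 ≤ (x - y) ^ 2 := by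
  obtain ⟨p, hp, rfl⟩ := hx
  obtain ⟨q, hq, rfl⟩ := hy
  have hpq : p - q ≠ 0 := sub_ne_zero.2 (by rintro rfl; exact hne rfl)
  have h4 : (4 : ℝ) ≤ ((p - q : ℤ) : ℝ) ^ 2 := by
    exact_mod_cast Int.four_le_sq_of_even_of_ne_zero (hp.sub_odd hq) hpq
  calc (2 * r) ^ 2 = 4 * r ^ 2 := by ring
    _ ≤ ((p - q : ℤ) : ℝ) ^ 2 * r ^ 2 := by gcongr
    _ = (p * r - q * r) ^ 2 := by push_cast; ring

lemma of_sign {e : ℝ} (he : e = 1 ∨ e = -1) (m : ℕ) (d : ℝ) :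
    IsOddMultiple (d / 2) (e * ((m : ℝ) - 1 / 2) * d) := by
  have hm : Odd (2 * (m : ℤ) - 1) := ⟨m - 1, by ring⟩
  rcases he with rfl | rfl
  · exact ⟨2 * m - 1, hm, by push_cast; ring⟩
  · exact ⟨-(2 * m - 1), hm.neg, by push_cast; ring⟩

end IsOddMultiple

section SquareQAM

variable {K : ℕ} {d : ℝ} {c c' : ℂ}

lemma isOddMultiple_re_im_of_mem_squareQAM (h : c ∈ squareQAM K d) :
    IsOddMultiple (d / 2) c.re ∧ IsOddMultiple (d / 2) c.im := by
  obtain ⟨m, n, -, -, -, -, e₁, e₂, he₁, he₂, rfl⟩ := h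
  constructor
  · convert IsOddMultiple.of_sign he₁ m d using 1
    simp
  · convert IsOddMultiple.of_sign he₂ n d using 1
    simp

lemma half_sq_le_norm_sq_of_mem_squareQAM (h : c ∈ squareQAM K d) :
    d ^ 2 / 2 ≤ ‖c‖ ^ 2 := by
  obtain ⟨hre, him⟩ := isOddMultiple_re_im_of_mem_squareQAM h
  rw [Complex.sq_norm, Complex.normSq_apply]
  nlinarith [hre.sq_le_sq, him.sq_le_sq]

lemma sq_le_norm_sub_sq_of_mem_squareQAM (hc : c ∈ squareQAM K d) (hc' : c' ∈ squareQAM K d)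
    (hne : c ≠ c') : d ^ 2 ≤ ‖c - c'‖ ^ 2 := by
  obtain ⟨hre, him⟩ := isOddMultiple_re_im_of_mem_squareQAM hc
  obtain ⟨hre', him'⟩ := isOddMultiple_re_im_of_mem_squareQAM hc'
  rw [Complex.sq_norm, Complex.normSq_apply, sub_re, sub_im]
  rcases not_and_or.1 (mt Complex.ext_iff.2 hne) with h | h
  · nlinarith [hre.sq_le_sq_sub hre' h, mul_self_nonneg (c.im - c'.im)]
  · nlinarith [him.sq_le_sq_sub him' h, mul_self_nonneg (c.re - c'.re)]

lemma one_add_I_mul_half_mem_squareQAM : (1 + I) * d / 2 ∈ squareQAM K d :=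
  ⟨1, 1, le_rfl, Nat.one_le_two_pow, le_rfl, Nat.one_le_two_pow, 1, 1, Or.inl rfl, Or.inl rfl,
    by push_cast; ring⟩

lemma one_sub_I_mul_half_mem_squareQAM : (1 - I) * d / 2 ∈ squareQAM K d :=
  ⟨1, 1, le_rfl, Nat.one_le_two_pow, le_rfl, Nat.one_le_two_pow, 1, -1, Or.inl rfl, Or.inr rfl,
    by push_cast; ring⟩

lemma norm_one_add_I_mul_half_sq : ‖(1 + I) * d / 2‖ ^ 2 = d ^ 2 / 2 := by
  rw [Complex.sq_norm, normSq_apply]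
  simp only [mul_re, mul_im, div_ofNat_re, div_ofNat_im, add_re, add_im, one_re, one_im, I_re,
    I_im, ofReal_re, ofReal_im]
  ring

lemma norm_one_sub_I_mul_half_sq : ‖(1 - I) * d / 2‖ ^ 2 = d ^ 2 / 2 := by
  rw [Complex.sq_norm, normSq_apply]
  simp only [mul_re, mul_im, div_ofNat_re, div_ofNat_im, sub_re, sub_im, one_re, one_im, I_re,
    I_im, ofReal_re, ofReal_im]
  ring

lemma norm_one_add_I_mul_half_sub_one_sub_I_mul_half_sq :
    ‖(1 + I) * d / 2 - (1 - I) * d / 2‖ ^ 2 = d ^ 2 := by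
  rw [Complex.sq_norm, normSq_apply]
  simp only [mul_re, mul_im, div_ofNat_re, div_ofNat_im, sub_re, sub_im, add_re, add_im, one_re,
    one_im, I_re, I_im, ofReal_re, ofReal_im]
  ring

end SquareQAM

theorem stmt8_general (K : ℕ) (d : ℝ) (hd : 0 < d) (a b : ℝ)
    (hab : ∀ c ∈ squareQAM K d, ‖c‖ ^ 2 < a * b) :
    (∀ c ∈ squareQAM K d, ∀ ctil ∈ squareQAM K d, c ≠ ctil →
      d ^ 2 / (a * b - d ^ 2 / 2) ≤ klDist a b c ctil) ∧
    ((1 + Complex.I) * d / 2 ∈ squareQAM K d ∧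
      (1 - Complex.I) * d / 2 ∈ squareQAM K d ∧
      (1 + Complex.I) * d / 2 ≠ (1 - Complex.I) * d / 2 ∧
      klDist a b ((1 + Complex.I) * d / 2) ((1 - Complex.I) * d / 2) =
        d ^ 2 / (a * b - d ^ 2 / 2)) := by
  have hnorm_add := norm_one_add_I_mul_half_sq (d := d)
  have hnorm_sub := norm_one_sub_I_mul_half_sq (d := d)
  have hdist := norm_one_add_I_mul_half_sub_one_sub_I_mul_half_sq (d := d)
  have hgap : d ^ 2 / 2 < a * b := hnorm_add ▸ hab _ one_add_I_mul_half_mem_squareQAM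
  refine ⟨fun c hc c' hc' hne => ?_, one_add_I_mul_half_mem_squareQAM,
    one_sub_I_mul_half_mem_squareQAM, fun h => ?_, ?_⟩
  · calc d ^ 2 / (a * b - d ^ 2 / 2) ≤ ‖c - c'‖ ^ 2 / (a * b - ‖c'‖ ^ 2) :=
          div_le_div₀ (by positivity) (sq_le_norm_sub_sq_of_mem_squareQAM hc hc' hne)
            (by linarith [hab c' hc']) (by linarith [half_sq_le_norm_sq_of_mem_squareQAM hc'])
      _ ≤ klDist a b c c' := div_le_klDist (hab c hc) (hab c' hc')
  · rw [h, sub_self, norm_zero] at hdist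
    nlinarith
  · rw [klDist_of_norm_sq_eq (hnorm_add.trans hnorm_sub.symm) (hnorm_sub ▸ hgap.ne), hdist,
      hnorm_sub]

/-- Over distinct points of the square QAM constellation, the minimum KL distance
is `d²/(ab - d²/2)`, attained at `c = (1+j)d/2`, `c̃ = (1-j)d/2`. -/
theorem stmt8 (K : ℕ) (hK : 1 ≤ K) (d : ℝ) (hd : 0 < d) (a b : ℝ)
    (ha : 0 < a) (hb : 0 < b)
    (hab : ∀ c ∈ squareQAM K d, ‖c‖ ^ 2 < a * b) :
    (∀ c ∈ squareQAM K d, ∀ ctil ∈ squareQAM K d, c ≠ ctil →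
      d ^ 2 / (a * b - d ^ 2 / 2) ≤ klDist a b c ctil) ∧
    ((1 + Complex.I) * d / 2 ∈ squareQAM K d ∧
      (1 - Complex.I) * d / 2 ∈ squareQAM K d ∧
      (1 + Complex.I) * d / 2 ≠ (1 - Complex.I) * d / 2 ∧
      klDist a b ((1 + Complex.I) * d / 2) ((1 - Complex.I) * d / 2) =
        d ^ 2 / (a * b - d ^ 2 / 2)) :=
  stmt8_general K d hd a b hab
end

section
/- Optimal solution of the joint problem: assume $P_1\beta_1 \leq \cdots \leq P_K\beta_K$ and $E_1 \leq \cdots \leq E_K$ with all quantities positive. Then the maximum over permutations $\pi$ of $\min_{k} P_k^2\beta_k^2 / E_{\pi(k)}$ is attained at the identity permutation, giving optimal minimum-distance squared $(d^\star)^2 = \min_k P_k^2 \beta_k^2 / E_k$. -/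
/-!
Pigeonhole: a permutation cannot map the `m + 1` indices `≤ m` into the `m` values `< m`, so
some `j ≤ m` has `m ≤ π j`. Since `P_k² β_k²` grows with `k` and `1 / E_e` shrinks with `e`,
the `j`-th term of the permuted minimum, `P_j² β_j² / E_{π j}`, is at most `P_m² β_m² / E_m`.
-/

open Finset

theorem Equiv.Perm.exists_le_and_le_apply {α : Type*} [LinearOrder α] [LocallyFiniteOrderBot α]
    (π : Equiv.Perm α) (m : α) : ∃ j ≤ m, m ≤ π j := by
  by_contra! h
  have hmaps : Set.MapsTo π (Iic m) (Iio m) := fun j hj => by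
    simpa using h j (mem_Iic.mp hj)
  have hcard := card_le_card_of_injOn π hmaps π.injective.injOn
  rw [← Iio_insert, card_insert_of_notMem notMem_Iio_self] at hcard
  omega

theorem Finset.inf'_apply_perm_le_inf'_diag {α β : Type*} [Fintype α] [LinearOrder α]
    [LocallyFiniteOrderBot α] [LinearOrder β] (F : α → α → β)
    (hF₁ : ∀ e, Monotone (F · e)) (hF₂ : ∀ k, Antitone (F k)) (π : Equiv.Perm α)
    (h : (univ : Finset α).Nonempty) :
    univ.inf' h (fun k => F k (π k)) ≤ univ.inf' h fun k => F k k := by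
  refine le_inf' _ _ fun m _ => ?_
  obtain ⟨j, hjm, hmj⟩ := π.exists_le_and_le_apply m
  calc univ.inf' h (fun k => F k (π k)) ≤ F j (π j) := inf'_le _ (mem_univ j)
    _ ≤ F m (π j) := hF₁ _ hjm
    _ ≤ F m m := hF₂ _ hmj

/-- Joint optimum: if `(P_k β_k)` and `(E_k)` are both nondecreasing and positive,
then over all permutations `π`, `min_k P_k² β_k² / E_{π(k)}` is maximized at the
identity; the optimal squared minimum distance is `(d⋆)² = min_k P_k² β_k² / E_k`. -/
theorem stmt17 (K : ℕ) (hK : 0 < K) (P β E : Fin K → ℝ)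
    (hP : ∀ k, 0 < P k) (hβ : ∀ k, 0 < β k) (hE : ∀ k, 0 < E k)
    (hPβmono : Monotone fun k => P k * β k) (hEmono : Monotone E) :
    IsGreatest
      {x | ∃ π : Equiv.Perm (Fin K),
        x = Finset.univ.inf' (Finset.univ_nonempty_iff.mpr ⟨⟨0, hK⟩⟩)
          fun k => (P k) ^ 2 * (β k) ^ 2 / E (π k)}
      (Finset.univ.inf' (Finset.univ_nonempty_iff.mpr ⟨⟨0, hK⟩⟩)
        fun k => (P k) ^ 2 * (β k) ^ 2 / E k) := by
  have hPβ_nonneg k : 0 ≤ P k * β k := (mul_pos (hP k) (hβ k)).le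
  have hnum_mono : Monotone fun k => P k ^ 2 * β k ^ 2 := fun j m hjm => by
    simpa only [mul_pow] using pow_le_pow_left₀ (hPβ_nonneg j) (hPβmono hjm) 2
  refine ⟨⟨1, rfl⟩, ?_⟩
  rintro x ⟨π, rfl⟩
  refine inf'_apply_perm_le_inf'_diag (fun k e => P k ^ 2 * β k ^ 2 / E e)
    (fun e _ _ hjm => div_le_div_of_nonneg_right (hnum_mono hjm) (hE e).le)
    (fun k _ _ hee => div_le_div_of_nonneg_left (by positivity) (hE _) (hEmono hee)) π _
end
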